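/- arXiv:2008.12232 — 5 statements merged into one kernel-verified Lean document; each statement's English description precedes it below -/
import Mathlib

section
/- Let $d_1,\dots,d_s$ be positive integers and let $D = \mathrm{lcm}(d_1,\dots,d_s)$. Then the number $I(d_1,\dots,d_s)$ of $s$-tuples $(y_1,\dots,y_s)$ of integers with $1 \le y_i \le d_i - 1$ for all $i$ and $y_1/d_1 + \cdots + y_s/d_s \equiv 0 \pmod 1$ satisfies $I(d_1,\dots,d_s) = \frac{(-1)^s}{D} \sum_{m=1}^{D} \prod_{i : d_i \mid m} (1-d_i)$. -/
open Finset

private lemma rootSum {ζ : ℂ} {k : ℕ} (hζ : IsPrimitiveRoot ζ k) (n : ℕ) :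
    ∑ m ∈ Finset.range k, (ζ ^ n) ^ m = if k ∣ n then (k : ℂ) else 0 := by
  by_cases h : k ∣ n
  · rw [if_pos h]
    have h1 : ζ ^ n = 1 := (hζ.pow_eq_one_iff_dvd n).2 h
    simp [h1]
  · rw [if_neg h]
    have h1 : ζ ^ n ≠ 1 := fun e => h ((hζ.pow_eq_one_iff_dvd n).1 e)
    rw [geom_sum_eq h1]
    have h2 : (ζ ^ n) ^ k = 1 := by
      rw [← pow_mul, mul_comm, pow_mul, hζ.pow_eq_one, one_pow]
    simp [h2]

private lemma innerSum {D : ℕ} {ζ : ℂ} (hD : 0 < D) (hζ : IsPrimitiveRoot ζ D)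
    (d : ℕ) (hd : 0 < d) (hdD : d ∣ D) (m : ℕ) :
    ∑ y ∈ Finset.Icc 1 (d - 1), ((ζ ^ (D / d)) ^ m) ^ y
      = (if d ∣ m then (d : ℂ) else 0) - 1 := by
  have hprim : IsPrimitiveRoot (ζ ^ (D / d)) d := hζ.pow hD (Nat.div_mul_cancel hdD).symm
  have hrange : Finset.range d = insert 0 (Finset.Icc 1 (d - 1)) := by
    ext x; simp only [Finset.mem_range, Finset.mem_insert, Finset.mem_Icc]; omega
  have h0 : (0 : ℕ) ∉ Finset.Icc 1 (d - 1) := by simp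
  have h4 := rootSum hprim m
  rw [hrange, Finset.sum_insert h0, pow_zero] at h4
  linear_combination h4

theorem stmt0 (s : ℕ) (d : Fin s → ℕ) (hd : ∀ i, 0 < d i)
    (D : ℕ) (hD : D = Finset.univ.lcm d) :
    (Nat.card {y : Fin s → ℕ //
        (∀ i, 1 ≤ y i ∧ y i ≤ d i - 1) ∧
        ∃ z : ℤ, ∑ i, (y i : ℚ) / (d i : ℚ) = (z : ℚ)} : ℚ) =
      (-1) ^ s / (D : ℚ) *
        ∑ m ∈ Finset.Icc 1 D,
          ∏ i ∈ Finset.univ.filter (fun i => d i ∣ m), (1 - (d i : ℚ)) := by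
  classical
  have hdvd : ∀ i, d i ∣ D := fun i => hD ▸ Finset.dvd_lcm (Finset.mem_univ i)
  have hDpos : 0 < D := by
    rcases Nat.eq_zero_or_pos D with h | h
    · exfalso
      rw [h, eq_comm, Finset.lcm_eq_zero_iff] at hD
      obtain ⟨i, -, hi⟩ := hD
      exact (hd i).ne' hi
    · exact h
  -- the counting finset
  set G : Finset (Fin s → ℕ) := Fintype.piFinset fun i => Finset.Icc 1 (d i - 1) with hG
  set F : Finset (Fin s → ℕ) := G.filter (fun y => D ∣ ∑ i, y i * (D / d i)) with hF
  -- Step 1: Nat.card = F.card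
  have hcard : Nat.card {y : Fin s → ℕ //
        (∀ i, 1 ≤ y i ∧ y i ≤ d i - 1) ∧
        ∃ z : ℤ, ∑ i, (y i : ℚ) / (d i : ℚ) = (z : ℚ)} = F.card := by
    rw [← Nat.card_eq_finsetCard F]
    apply Nat.card_congr
    apply Equiv.subtypeEquivRight
    intro y
    rw [hF, Finset.mem_filter, hG, Fintype.mem_piFinset]
    have hsum : ∑ i, (y i : ℚ) / (d i : ℚ)
        = ((∑ i, y i * (D / d i) : ℕ) : ℚ) / (D : ℚ) := by
      push_cast
      rw [Finset.sum_div]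
      refine Finset.sum_congr rfl fun i _ => ?_
      have hdi : (d i : ℚ) ≠ 0 := Nat.cast_ne_zero.2 (hd i).ne'
      have hDq : (D : ℚ) ≠ 0 := Nat.cast_ne_zero.2 hDpos.ne'
      have hmul : ((D / d i : ℕ) : ℚ) * (d i : ℚ) = (D : ℚ) := by
        rw [← Nat.cast_mul, Nat.div_mul_cancel (hdvd i)]
      rw [div_eq_div_iff hdi hDq, mul_assoc, hmul]
    constructor
    · rintro ⟨h1, z, hz⟩
      refine ⟨fun i => Finset.mem_Icc.2 (h1 i), ?_⟩
      rw [hsum] at hz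
      have hDq : (D : ℚ) ≠ 0 := Nat.cast_ne_zero.2 hDpos.ne'
      rw [div_eq_iff hDq] at hz
      have hz' : ((∑ i, y i * (D / d i) : ℕ) : ℤ) = z * D := by
        apply Int.cast_injective (α := ℚ)
        push_cast
        push_cast at hz
        exact hz
      have hdd : (D : ℤ) ∣ ((∑ i, y i * (D / d i) : ℕ) : ℤ) := ⟨z, by rw [hz', mul_comm]⟩
      exact Int.ofNat_dvd.1 hdd
    · rintro ⟨h1, h2⟩
      refine ⟨fun i => Finset.mem_Icc.1 (h1 i), ?_⟩
      obtain ⟨c, hc⟩ := h2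
      refine ⟨(c : ℤ), ?_⟩
      rw [hsum, hc]
      push_cast
      field_simp
  rw [hcard]
  -- Step 2: complex identity
  obtain ⟨ζ, hζ⟩ : ∃ ζ : ℂ, IsPrimitiveRoot ζ D := ⟨_, Complex.isPrimitiveRoot_exp D hDpos.ne'⟩
  have key : (D : ℂ) * F.card
      = ∑ m ∈ Finset.range D, ∏ i, ((if d i ∣ m then (d i : ℂ) else 0) - 1) := by
    have step1 : ∀ m : ℕ, ∏ i, ((if d i ∣ m then (d i : ℂ) else 0) - 1)
        = ∑ y ∈ G, (ζ ^ (∑ i, y i * (D / d i))) ^ m := by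
      intro m
      have : ∀ i : Fin s, ((if d i ∣ m then (d i : ℂ) else 0) - 1)
          = ∑ y ∈ Finset.Icc 1 (d i - 1), ((ζ ^ (D / d i)) ^ m) ^ y :=
        fun i => (innerSum hDpos hζ (d i) (hd i) (hdvd i) m).symm
      rw [Finset.prod_congr rfl (fun i _ => this i), Finset.prod_univ_sum]
      refine Finset.sum_congr rfl fun y _ => ?_
      calc ∏ i, ((ζ ^ (D / d i)) ^ m) ^ y i
          = ∏ i, ζ ^ (y i * (D / d i) * m) := by
            refine Finset.prod_congr rfl fun i _ => ?_
            rw [← pow_mul, ← pow_mul]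
            congr 1
            ring
        _ = ζ ^ ∑ i, y i * (D / d i) * m := Finset.prod_pow_eq_pow_sum _ _ _
        _ = (ζ ^ ∑ i, y i * (D / d i)) ^ m := by rw [← pow_mul, Finset.sum_mul]
    rw [Finset.sum_congr rfl (fun m _ => step1 m), Finset.sum_comm]
    have : ∀ y ∈ G, ∑ m ∈ Finset.range D, (ζ ^ (∑ i, y i * (D / d i))) ^ m
        = if D ∣ ∑ i, y i * (D / d i) then (D : ℂ) else 0 :=
      fun y _ => rootSum hζ _
    rw [Finset.sum_congr rfl this, Finset.sum_ite, Finset.sum_const, Finset.sum_const]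
    simp [hF, mul_comm]
  -- Step 3: rewrite summand
  have step3 : ∀ m : ℕ, ∏ i, ((if d i ∣ m then (d i : ℂ) else 0) - 1)
      = (-1 : ℂ) ^ s * ∏ i ∈ Finset.univ.filter (fun i => d i ∣ m), (1 - (d i : ℂ)) := by
    intro m
    have hpow : (-1 : ℂ) ^ s = ∏ _i : Fin s, (-1 : ℂ) := by simp
    rw [Finset.prod_filter, hpow, ← Finset.prod_mul_distrib]
    refine Finset.prod_congr rfl fun i _ => ?_
    split_ifs <;> ring
  rw [Finset.sum_congr rfl (fun m _ => step3 m), ← Finset.mul_sum] at key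
  -- Step 4: range D → Icc 1 D
  have step4 : ∑ m ∈ Finset.range D, ∏ i ∈ Finset.univ.filter (fun i => d i ∣ m), (1 - (d i : ℂ))
      = ∑ m ∈ Finset.Icc 1 D, ∏ i ∈ Finset.univ.filter (fun i => d i ∣ m), (1 - (d i : ℂ)) := by
    have hIcc : Finset.Icc 1 D = Finset.Ico 1 (D + 1) := by rw [Finset.Ico_add_one_right_eq_Icc]
    rw [hIcc, Finset.sum_Ico_succ_top hDpos, Finset.range_eq_Ico,
      Finset.sum_eq_sum_Ico_succ_bot hDpos]
    have : (Finset.univ.filter (fun i => d i ∣ 0)) = (Finset.univ.filter (fun i => d i ∣ D)) := by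
      ext i; simp [hdvd i]
    rw [this]; ring
  rw [step4] at key
  -- Step 5: descend to ℚ
  have keyQ : (D : ℚ) * F.card = (-1 : ℚ) ^ s *
      ∑ m ∈ Finset.Icc 1 D, ∏ i ∈ Finset.univ.filter (fun i => d i ∣ m), (1 - (d i : ℚ)) := by
    have : (((D : ℚ) * F.card : ℚ) : ℂ) = (((-1 : ℚ) ^ s *
        ∑ m ∈ Finset.Icc 1 D, ∏ i ∈ Finset.univ.filter (fun i => d i ∣ m), (1 - (d i : ℚ)) : ℚ) : ℂ) := by
      push_cast
      exact key
    exact_mod_cast this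
  have hDq : (D : ℚ) ≠ 0 := Nat.cast_ne_zero.2 hDpos.ne'
  rw [div_mul_eq_mul_div, eq_div_iff hDq]
  linarith [keyQ]
end

section
/- Let $d_1,\dots,d_s$ be positive integers. Then $I(d_1,\dots,d_s) = (-1)^s + (-1)^s \sum_{r=1}^{s} (-1)^r \sum_{1 \le i_1 < \cdots < i_r \le s} \frac{d_{i_1} \cdots d_{i_r}}{\mathrm{lcm}(d_{i_1},\dots,d_{i_r})}$. -/
/-!
A tuple `y` with `0 ≤ yᵢ < dᵢ` is an element of `∏ ZMod dᵢ`, and `∑ yᵢ/dᵢ ∈ ℤ` says that it lies in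
the kernel of `x ↦ ∑ xᵢ/dᵢ : ∏ ZMod dᵢ → ℝ/ℤ`. The image of this homomorphism is killed by
`L = lcm dᵢ`, so it has at most `L` elements, and it contains a cyclic group of order `dᵢ` for each
`i`, so it has exactly `L` elements; the kernel therefore has `∏ dᵢ / L` elements. Tuples vanishing
outside `T` are the tuples for `d` with `dᵢ` replaced by `1` outside `T`, which gives
`∏_{i ∈ T} dᵢ / lcm_{i ∈ T} dᵢ` of them, and inclusion–exclusion over the coordinates that vanish
counts the tuples with no zero coordinate.
-/

open Finset

section InclusionExclusion

variable {ι : Type*} [Fintype ι] [DecidableEq ι]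

lemma card_filter_forall_ne_zero {α R : Type*} [Zero α] [DecidableEq α] [CommRing R]
    (A : Finset (ι → α)) :
    (#{y ∈ A | ∀ i, y i ≠ 0} : R) =
      ∑ T : Finset ι, (-1 : R) ^ #Tᶜ * #{y ∈ A | ∀ i ∉ T, y i = 0} := by
  simp only [natCast_card_filter, mul_sum]
  rw [sum_comm]
  refine sum_congr rfl fun y _ => ?_
  have hfactor : ∀ i, (if y i ≠ 0 then 1 else 0 : R) = 1 + -(if y i = 0 then 1 else 0) :=
    fun i => by split_ifs <;> simp_all
  calc (if ∀ i, y i ≠ 0 then 1 else 0 : R)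
      = ∏ i, (1 + -(if y i = 0 then 1 else 0 : R)) := by
        rw [← Fintype.prod_congr _ _ hfactor, prod_boole]
        simp
    _ = _ := by
      rw [prod_add]
      refine sum_congr (by simp) fun T _ => ?_
      rw [prod_const_one, one_mul, prod_neg, prod_boole, ← compl_eq_univ_sdiff]
      simp [mul_ite]

lemma sum_neg_one_pow_card_compl_mul {R : Type*} [CommRing R] (f : Finset ι → R) :
    ∑ T : Finset ι, (-1) ^ #Tᶜ * f T =
      (-1) ^ Fintype.card ι * f ∅ + (-1) ^ Fintype.card ι *
        ∑ r ∈ Icc 1 (Fintype.card ι), (-1) ^ r *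
          ∑ T ∈ univ.powerset.filter (fun T => #T = r), f T := by
  have hsign : ∀ T : Finset ι, (-1 : R) ^ #Tᶜ = (-1) ^ Fintype.card ι * (-1) ^ #T := by
    intro T
    rw [← card_compl_add_card T, pow_add, mul_assoc, ← pow_add, ← two_mul, pow_mul]
    simp
  have hlayer : ∀ j, ∑ T ∈ powersetCard j univ, (-1 : R) ^ #T * f T =
      (-1) ^ j * ∑ T ∈ univ.powerset.filter (fun T => #T = j), f T := by
    intro j
    rw [powersetCard_eq_filter, mul_sum]
    exact sum_congr rfl fun T hT => by rw [(mem_filter.mp hT).2]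
  simp_rw [hsign, mul_assoc, ← mul_sum, ← mul_add]
  rw [← powerset_univ, sum_powerset, card_univ, range_eq_Ico,
    sum_eq_sum_Ico_succ_bot (Nat.zero_lt_succ _), zero_add, Nat.succ_eq_add_one,
    Ico_add_one_right_eq_Icc]
  simp [hlayer]

lemma lcm_univ_piecewise_one (T : Finset ι) (d : ι → ℕ) :
    univ.lcm (T.piecewise d 1) = T.lcm d := by
  refine Nat.dvd_antisymm (Finset.lcm_dvd fun i _ => ?_) (Finset.lcm_dvd fun i hi => ?_)
  · by_cases hi : i ∈ T
    · simpa [hi] using dvd_lcm hi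
    · simp [hi]
  · simpa [hi] using dvd_lcm (s := univ) (f := T.piecewise d 1) (mem_univ i)

end InclusionExclusion

section FracSum

variable {ι : Type*} [Fintype ι]

def FracSumIsInt (d y : ι → ℕ) : Prop := ∃ z : ℤ, ∑ i, (y i : ℚ) / d i = z

instance (d : ι → ℕ) : DecidablePred (FracSumIsInt d) := fun y =>
  decidable_of_iff ((∑ i, (y i : ℚ) / d i).den = 1) <| by
    rw [Rat.den_eq_one_iff]
    exact ⟨fun h => ⟨_, h.symm⟩, fun ⟨z, hz⟩ => by simp [hz]⟩

lemma fracSumIsInt_congr {d e y : ι → ℕ} (h : ∀ i, d i = e i ∨ y i = 0) :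
    FracSumIsInt d y ↔ FracSumIsInt e y := by
  have hsum : ∑ i, (y i : ℚ) / d i = ∑ i, (y i : ℚ) / e i :=
    sum_congr rfl fun i _ => by rcases h i with h | h <;> simp [h]
  rw [FracSumIsInt, FracSumIsInt, hsum]

variable (e : ι → ℕ) [∀ i, NeZero (e i)]

noncomputable def fracSumHom : (∀ i, ZMod (e i)) →+ UnitAddCircle :=
  ∑ i, ZMod.toAddCircle.comp (Pi.evalAddMonoidHom (fun i => ZMod (e i)) i)

lemma fracSumHom_apply (x : ∀ i, ZMod (e i)) :
    fracSumHom e x = ∑ i, ZMod.toAddCircle (x i) := by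
  simp [fracSumHom]

lemma fracSumHom_eq_zero_iff (x : ∀ i, ZMod (e i)) :
    fracSumHom e x = 0 ↔ FracSumIsInt e fun i => (x i).val := by
  simp only [fracSumHom_apply, ZMod.toAddCircle_apply, ← QuotientAddGroup.mk_sum,
    AddCircle.coe_eq_zero_iff, zsmul_eq_mul, mul_one, FracSumIsInt]
  refine exists_congr fun z => ?_
  have hcast : ∑ i, ((x i).val : ℝ) / e i = ((∑ i, ((x i).val : ℚ) / e i : ℚ) : ℝ) := by
    push_cast; rfl
  rw [eq_comm, hcast, ← Rat.cast_intCast, Rat.cast_inj]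

lemma fracSumHom_single [DecidableEq ι] (i : ι) (a : ZMod (e i)) :
    fracSumHom e (Pi.single i a) = ZMod.toAddCircle a := by
  rw [fracSumHom_apply, Fintype.sum_eq_single i fun j hj => by simp [hj], Pi.single_eq_same]

lemma lcm_nsmul_fracSumHom (x : ∀ i, ZMod (e i)) : univ.lcm e • fracSumHom e x = 0 := by
  rw [fracSumHom_apply, smul_sum]
  refine sum_eq_zero fun i _ => ?_
  rw [← map_nsmul, nsmul_eq_mul, (ZMod.natCast_eq_zero_iff _ _).mpr (dvd_lcm (mem_univ i)),
    zero_mul, map_zero]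

lemma card_range_fracSumHom : Nat.card (fracSumHom e).range = univ.lcm e := by
  classical
  apply le_antisymm
  · have hL : univ.lcm e ≠ 0 := by simp [Finset.lcm_eq_zero_iff, NeZero.ne]
    obtain ⟨hfin, hcard⟩ := Set.encard_le_coe_iff_finite_ncard_le.mp <|
      AddCircle.card_torsion_le_of_isSMulRegular (1 : ℝ) _ hL <|
        .of_right_eq_zero_of_smul fun _ ↦ by simp [hL]
    rw [← Nat.card_coe_set_eq] at hcard
    refine (Nat.card_mono hfin ?_).trans hcard
    rintro _ ⟨x, rfl⟩
    exact lcm_nsmul_fracSumHom e x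
  · refine Nat.le_of_dvd Nat.card_pos (Finset.lcm_dvd fun i _ => ?_)
    have hinj := ZMod.toAddCircle_injective (e i)
    calc e i = Nat.card (ZMod.toAddCircle : ZMod (e i) →+ UnitAddCircle).range := by
          rw [Nat.card_congr (AddMonoidHom.ofInjective hinj).toEquiv.symm, Nat.card_zmod]
      _ ∣ Nat.card (fracSumHom e).range := AddSubgroup.card_dvd_of_le ?_
    rintro _ ⟨a, rfl⟩
    exact ⟨Pi.single i a, fracSumHom_single e i a⟩

lemma card_ker_fracSumHom_mul_lcm : Nat.card (fracSumHom e).ker * univ.lcm e = ∏ i, e i := by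
  rw [← card_range_fracSumHom, ← AddSubgroup.index_ker, AddSubgroup.card_mul_index, Nat.card_pi]
  simp only [Nat.card_zmod]

end FracSum

section Counting

variable {ι : Type*} [Fintype ι] [DecidableEq ι]

lemma card_filter_fracSumIsInt_mul_lcm {e : ι → ℕ} (he : ∀ i, 0 < e i) :
    #{y ∈ Fintype.piFinset fun i => range (e i) | FracSumIsInt e y} * univ.lcm e = ∏ i, e i := by
  have : ∀ i, NeZero (e i) := fun i => ⟨(he i).ne'⟩
  have hval : ∀ y ∈ Fintype.piFinset fun i => range (e i),
      (fun i => ((y i : ZMod (e i))).val) = y := fun y hy => funext fun i =>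
    ZMod.val_natCast_of_lt (mem_range.mp (Fintype.mem_piFinset.mp hy i))
  rw [← card_ker_fracSumHom_mul_lcm e, Nat.card_eq_fintype_card, Fintype.card_subtype]
  congr 1
  refine card_nbij' (fun y i => (y i : ZMod (e i))) (fun x i => (x i).val) ?_ ?_ ?_ ?_
  · intro y hy
    simp only [coe_filter, Set.mem_ofPred_eq, mem_univ, true_and, AddMonoidHom.mem_ker,
      fracSumHom_eq_zero_iff] at hy ⊢
    rw [hval y hy.1]
    exact hy.2
  · intro x hx
    simp only [coe_filter, Set.mem_ofPred_eq, mem_univ, true_and, AddMonoidHom.mem_ker,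
      fracSumHom_eq_zero_iff] at hx ⊢
    exact ⟨Fintype.mem_piFinset.mpr fun i => mem_range.mpr (ZMod.val_lt _), hx⟩
  · intro y hy
    exact hval y (mem_filter.mp hy).1
  · intro x _
    exact funext fun i => ZMod.natCast_zmod_val (x i)

lemma card_filter_fracSumIsInt_vanishing {d : ι → ℕ} (hd : ∀ i, 0 < d i) (T : Finset ι) :
    (#{y ∈ {y ∈ Fintype.piFinset fun i => range (d i) | FracSumIsInt d y} |
        ∀ i ∉ T, y i = 0} : ℚ) =
      (∏ i ∈ T, (d i : ℚ)) / (T.lcm d : ℕ) := by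
  set e := T.piecewise d 1
  have he : ∀ i, 0 < e i := fun i => by by_cases hi : i ∈ T <;> simp [e, hi, hd i]
  have hbox : ∀ y : ι → ℕ, (∀ i, y i < e i) ↔ (∀ i, y i < d i) ∧ ∀ i ∉ T, y i = 0 := by
    intro y
    rw [← forall_and]
    refine forall_congr' fun i => ?_
    by_cases hi : i ∈ T
    · simp [e, hi]
    · have := hd i
      simp only [e, hi, not_false_eq_true, piecewise_eq_of_notMem, Pi.one_apply, forall_const]
      omega
  have hagree : ∀ y : ι → ℕ, (∀ i ∉ T, y i = 0) → ∀ i, d i = e i ∨ y i = 0 := by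
    intro y hzero i
    by_cases hi : i ∈ T
    · exact .inl (T.piecewise_eq_of_mem _ _ hi).symm
    · exact .inr (hzero i hi)
  have hset : {y ∈ {y ∈ Fintype.piFinset fun i => range (d i) | FracSumIsInt d y} |
      ∀ i ∉ T, y i = 0} = {y ∈ Fintype.piFinset fun i => range (e i) | FracSumIsInt e y} := by
    ext y
    simp only [mem_filter, Fintype.mem_piFinset, mem_range, hbox]
    constructor
    · rintro ⟨⟨hlt, hint⟩, hzero⟩
      exact ⟨⟨hlt, hzero⟩, (fracSumIsInt_congr (hagree y hzero)).mp hint⟩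
    · rintro ⟨⟨hlt, hzero⟩, hint⟩
      exact ⟨⟨hlt, (fracSumIsInt_congr (hagree y hzero)).mpr hint⟩, hzero⟩
  have hL : T.lcm d ≠ 0 := by simp [Finset.lcm_eq_zero_iff, (hd _).ne']
  rw [hset, eq_div_iff (Nat.cast_ne_zero.mpr hL), ← lcm_univ_piecewise_one]
  exact_mod_cast (card_filter_fracSumIsInt_mul_lcm he).trans (by simp [e, prod_piecewise])

lemma card_subtype_eq_card_filter_ne_zero {d : ι → ℕ} (hd : ∀ i, 0 < d i) :
    Nat.card {y : ι → ℕ // (∀ i, 1 ≤ y i ∧ y i ≤ d i - 1) ∧ FracSumIsInt d y} =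
      #{y ∈ {y ∈ Fintype.piFinset fun i => range (d i) | FracSumIsInt d y} | ∀ i, y i ≠ 0} := by
  rw [← Nat.card_eq_finsetCard]
  refine Nat.card_congr (Equiv.subtypeEquivRight fun y => ?_)
  have hbounds : ∀ i, (1 ≤ y i ∧ y i ≤ d i - 1) ↔ (y i < d i ∧ y i ≠ 0) := fun i => by
    have := hd i
    omega
  simp only [hbounds, forall_and, mem_filter, Fintype.mem_piFinset, mem_range]
  tauto

end Counting

theorem stmt1 (s : ℕ) (d : Fin s → ℕ) (hd : ∀ i, 0 < d i) :
    (Nat.card {y : Fin s → ℕ //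
        (∀ i, 1 ≤ y i ∧ y i ≤ d i - 1) ∧
        ∃ z : ℤ, ∑ i, (y i : ℚ) / (d i : ℚ) = (z : ℚ)} : ℚ) =
      (-1) ^ s + (-1) ^ s *
        ∑ r ∈ Finset.Icc 1 s, (-1 : ℚ) ^ r *
          ∑ T ∈ (Finset.univ : Finset (Fin s)).powerset.filter (fun T => T.card = r),
            (∏ i ∈ T, (d i : ℚ)) / ((Finset.lcm T d : ℕ) : ℚ) := by
  change (Nat.card {y : Fin s → ℕ // _ ∧ FracSumIsInt d y} : ℚ) = _
  rw [card_subtype_eq_card_filter_ne_zero hd, card_filter_forall_ne_zero,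
    Fintype.sum_congr _ _ fun T => by rw [card_filter_fracSumIsInt_vanishing hd T],
    sum_neg_one_pow_card_compl_mul, Fintype.card_fin]
  simp
end

section
/- Let $q = p^{2r}$ where $p$ is an odd prime and $r \ge 1$. Then the number of projective $\mathbb{F}_q$-rational points on the Hermitian curve $x^{p^r+1} + y^{p^r+1} = z^{p^r+1}$ equals $p^{3r} + 1$. -/
open Finset Polynomial

/-- In a product type, the cardinality of a filtered set is the sum over the second
coordinate of the cardinalities of slices. -/
lemma herm_card_filter_prod {α β : Type*} [Fintype α] [Fintype β] [DecidableEq β]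
    (Q : α × β → Prop) [DecidablePred Q] :
    (Finset.univ.filter Q).card = ∑ b : β, (Finset.univ.filter fun a : α => Q (a, b)).card := by
  rw [Finset.card_eq_sum_card_fiberwise (f := Prod.snd) (t := Finset.univ)
    (fun x _ => Finset.mem_univ _)]
  refine Finset.sum_congr rfl fun b _ => ?_
  refine Finset.card_bij' (fun x _ => x.1) (fun a _ => (a, b)) ?_ ?_ ?_ ?_
  · rintro ⟨a, b'⟩ hx
    simp only [Finset.mem_filter, Finset.mem_univ, true_and] at hx ⊢
    obtain ⟨h1, h2⟩ := hx
    subst h2; exact h1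
  · intro a ha
    simp only [Finset.mem_filter, Finset.mem_univ, true_and, and_true] at ha ⊢
    exact ha
  · rintro ⟨a, b'⟩ hx
    simp only [Finset.mem_filter] at hx
    simp [hx.2]
  · intro a ha; rfl

/-- Summing a triple count over the last coordinate. -/
lemma herm_card_filter_triple {α : Type*} [Fintype α] [DecidableEq α]
    (Q : α → α → α → Prop) [∀ x y z, Decidable (Q x y z)] :
    (Finset.univ.filter fun t : α × α × α => Q t.1 t.2.1 t.2.2).card
      = ∑ c : α, (Finset.univ.filter fun ab : α × α => Q ab.1 ab.2 c).card := by
  rw [Finset.card_eq_sum_card_fiberwise (f := fun t : α × α × α => t.2.2)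
    (t := Finset.univ) (fun x _ => Finset.mem_univ _)]
  refine Finset.sum_congr rfl fun c _ => ?_
  refine Finset.card_bij' (fun t _ => (t.1, t.2.1)) (fun ab _ => (ab.1, ab.2, c)) ?_ ?_ ?_ ?_
  · rintro ⟨x, y, z⟩ ht
    simp only [Finset.mem_filter, Finset.mem_univ, true_and] at ht ⊢
    obtain ⟨h1, h2⟩ := ht
    subst h2; exact h1
  · intro ab hab
    simp only [Finset.mem_filter, Finset.mem_univ, true_and, and_true] at hab ⊢
    exact hab
  · rintro ⟨x, y, z⟩ ht
    simp only [Finset.mem_filter] at ht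
    simp [ht.2]
  · intro ab hab; rfl

/-- Key counting fact: in a finite field of cardinality `m * k + 1`, every `k`-th root of
unity has exactly `m` `m`-th roots. -/
lemma herm_pow_fiber_card {F : Type*} [Field F] [Fintype F] [DecidableEq F]
    (m k : ℕ) (hm : 0 < m) (hk : 0 < k) (hcard : Fintype.card F = m * k + 1)
    (w : F) (hw : w ≠ 0) (hwk : w ^ k = 1) :
    (Finset.univ.filter fun x : F => x ^ m = w).card = m := by
  -- a primitive m-th root of unity
  obtain ⟨g, hg⟩ := IsCyclic.exists_generator (α := Fˣ)
  have hcu : Fintype.card Fˣ = m * k := by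
    rw [Fintype.card_units, hcard]; simp
  have horder : orderOf g = m * k := by
    rw [orderOf_eq_card_of_forall_mem_zpowers hg, Nat.card_eq_fintype_card, hcu]
  have horder2 : orderOf (g ^ k) = m := by
    rw [orderOf_pow, horder, Nat.gcd_comm, Nat.gcd_eq_left (dvd_mul_left k m),
      Nat.mul_div_cancel _ hk]
  have hζ : IsPrimitiveRoot ((g ^ k : Fˣ) : F) m := by
    have := IsPrimitiveRoot.orderOf (g ^ k)
    rw [horder2] at this
    exact IsPrimitiveRoot.coe_units_iff.mpr this
  -- fibers of the m-power map
  have hroots : ∀ a : F, Finset.univ.filter (fun x : F => x ^ m = a)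
      = (Polynomial.nthRoots m a).toFinset := by
    intro a; ext x
    simp [Polynomial.mem_nthRoots hm]
  have hfiber : ∀ a : F, a ≠ 0 →
      (Finset.univ.filter fun x : F => x ^ m = a).card
        = if ∃ α : F, α ^ m = a then m else 0 := by
    intro a ha
    rw [hroots a, Multiset.toFinset_card_of_nodup (hζ.nthRoots_nodup ha), hζ.card_nthRoots]
    congr!
  have hzero : (Finset.univ.filter fun x : F => x ^ m = (0:F)).card = 1 := by
    have : (Finset.univ.filter fun x : F => x ^ m = (0:F)) = {0} := by
      ext x; simp [pow_eq_zero_iff hm.ne']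
    rw [this, Finset.card_singleton]
  -- the image of the m-power map on nonzero elements
  set Img : Finset F := (Finset.univ.erase 0).filter (fun a => ∃ α : F, α ^ m = a) with hImg
  set Kstar : Finset F := Finset.univ.filter (fun a : F => a ^ k = 1) with hKstar
  have hsub : Img ⊆ Kstar := by
    intro a ha
    simp only [hImg, Finset.mem_filter, Finset.mem_erase, Finset.mem_univ, true_and,
      and_true] at ha
    obtain ⟨ha0, α, hα⟩ := ha
    have hα0 : α ≠ 0 := by
      rintro rfl; exact ha0 (by rw [← hα, zero_pow hm.ne'])
    simp only [hKstar, Finset.mem_filter, Finset.mem_univ, true_and]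
    rw [← hα, ← pow_mul, ← Nat.add_sub_cancel (m * k) 1, ← hcard]
    exact FiniteField.pow_card_sub_one_eq_one α hα0
  have hKcard : Kstar.card ≤ k := by
    have h1 : Kstar ⊆ (Polynomial.nthRoots k (1:F)).toFinset := by
      intro a ha
      simp only [hKstar, Finset.mem_filter, Finset.mem_univ, true_and] at ha
      simp [Polynomial.mem_nthRoots hk, ha]
    calc Kstar.card ≤ (Polynomial.nthRoots k (1:F)).toFinset.card := Finset.card_le_card h1
      _ ≤ Multiset.card (Polynomial.nthRoots k (1:F)) := Multiset.toFinset_card_le _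
      _ ≤ k := Polynomial.card_nthRoots k 1
  -- counting: the fibers partition F
  have hsum : Fintype.card F
      = ∑ a : F, (Finset.univ.filter fun x : F => x ^ m = a).card := by
    rw [← Finset.card_univ]
    exact Finset.card_eq_sum_card_fiberwise (f := fun x : F => x ^ m) (fun x _ => Finset.mem_univ _)
  have hsplit : ∑ a : F, (Finset.univ.filter fun x : F => x ^ m = a).card
      = 1 + Img.card * m := by
    rw [← Finset.add_sum_erase _ _ (Finset.mem_univ (0:F)), hzero]
    congr 1
    have hcg : ∀ a ∈ Finset.univ.erase (0:F),
        (Finset.univ.filter fun x : F => x ^ m = a).card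
          = if ∃ α : F, α ^ m = a then m else 0 := by
      intro a ha
      exact hfiber a (Finset.mem_erase.mp ha).1
    rw [Finset.sum_congr rfl hcg, ← Finset.sum_filter, Finset.sum_const, smul_eq_mul]
  have hImgcard : Img.card = k := by
    have h1 : m * k + 1 = 1 + Img.card * m := by rw [← hcard, hsum, hsplit]
    rw [add_comm 1 (Img.card * m)] at h1
    have h2 : m * k = Img.card * m := Nat.add_right_cancel h1
    rw [mul_comm] at h2
    exact (Nat.eq_of_mul_eq_mul_right hm h2).symm
  have heq : Img = Kstar := Finset.eq_of_subset_of_card_le hsub (by rw [hImgcard]; exact hKcard)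
  have hwImg : w ∈ Img := by
    rw [heq]; simp [hKstar, hwk]
  simp only [hImg, Finset.mem_filter] at hwImg
  rw [hfiber w hw, if_pos hwImg.2]

/-- Coordinates equivalence. -/
def herm_e3 (F : Type*) : (Fin 3 → F) ≃ F × F × F where
  toFun v := (v 0, v 1, v 2)
  invFun t := ![t.1, t.2.1, t.2.2]
  left_inv v := by funext i; fin_cases i <;> rfl
  right_inv t := rfl

lemma herm_sq (u : ℕ) (hu : 1 ≤ u) : u * u = (u + 1) * (u - 1) + 1 := by
  obtain ⟨t, rfl⟩ : ∃ t, u = t + 1 := ⟨u - 1, by omega⟩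
  simp only [Nat.add_sub_cancel]
  ring

lemma herm_arith (u : ℕ) (hu : 3 ≤ u) :
    (u * u - 1) * (u + 1) + (u * u - 1) * ((u + 1) + (u * u - (u + 1)) * (u + 1))
      = (u * u * u + 1) * (u * u - 1) := by
  have h1 : 1 ≤ u * u := by nlinarith
  have h2 : u + 1 ≤ u * u := by nlinarith
  zify [h1, h2]
  ring

theorem stmt6 (p r : ℕ) (hp : p.Prime) (hodd : Odd p) (hr : 1 ≤ r)
    (F : Type*) [Field F] [Fintype F] (hF : Fintype.card F = p ^ (2 * r)) :
    Nat.card {P : Projectivization F (Fin 3 → F) //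
        (P.rep 0) ^ (p ^ r + 1) + (P.rep 1) ^ (p ^ r + 1) = (P.rep 2) ^ (p ^ r + 1)} =
      p ^ (3 * r) + 1 := by
  letI : DecidableEq F := Classical.decEq F
  set s := p ^ r with hs
  set m := s + 1 with hm
  have hs3 : 3 ≤ s := by
    have hp3 : 3 ≤ p := by
      rcases hp.eq_two_or_odd with h2 | _
      · exfalso; rw [h2] at hodd; exact (by decide : ¬ Odd 2) hodd
      · rcases hp.two_le.lt_or_eq with h | h
        · omega
        · exfalso; rw [← h] at hodd; exact (by decide : ¬ Odd 2) hodd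
    calc 3 ≤ p := hp3
      _ = p ^ 1 := (pow_one p).symm
      _ ≤ p ^ r := Nat.pow_le_pow_right (by omega) hr
  have hcard : Fintype.card F = s * s := by rw [hF, two_mul, pow_add]
  have hcard' : Fintype.card F = m * (s - 1) + 1 := by
    rw [hcard]; exact herm_sq s (by omega)
  -- characteristic
  have hcharp : CharP F p := by
    obtain ⟨p', hc⟩ := CharP.exists F
    haveI := hc
    obtain ⟨n, hp', hcn⟩ := FiniteField.card F p'
    have hpp' : p' = p := by
      have h1 : p' ∣ p ^ (2 * r) := by
        rw [← hF, hcn]; exact dvd_pow_self p' n.pos.ne'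
      have := hp'.dvd_of_dvd_pow h1
      exact (Nat.prime_dvd_prime_iff_eq hp' hp).mp this
    rwa [hpp'] at hc
  haveI := hcharp
  haveI : Fact p.Prime := ⟨hp⟩
  have hFrob : ∀ a b : F, (a - b) ^ s = a ^ s - b ^ s := fun a b => sub_pow_char_pow a b r
  have hpowq : ∀ x : F, x ^ (s * s) = x := by
    intro x
    have := FiniteField.pow_card x
    rwa [hcard] at this
  -- m-th powers are fixed by the s-power Frobenius
  have hA : ∀ x : F, (x ^ m) ^ s = x ^ m := by
    intro x
    calc (x ^ m) ^ s = x ^ (s * s + s) := by rw [← pow_mul]; congr 1; rw [hm]; ring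
      _ = x ^ (s * s) * x ^ s := by rw [pow_add]
      _ = x * x ^ s := by rw [hpowq]
      _ = x ^ m := by rw [hm, pow_succ, mul_comm]
  have hfix_root : ∀ w : F, w ≠ 0 → w ^ s = w → w ^ (s - 1) = 1 := by
    intro w hw hws
    have h1 : w ^ (s - 1) * w = 1 * w := by
      rw [one_mul, ← pow_succ, show s - 1 + 1 = s by omega]
      exact hws
    exact mul_right_cancel₀ hw h1
  -- the fiber-count function
  have hnz : (Finset.univ.filter fun x : F => x ^ m = (0:F)).card = 1 := by
    have : (Finset.univ.filter fun x : F => x ^ m = (0:F)) = {0} := by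
      ext x; simp [pow_eq_zero_iff (show m ≠ 0 by omega)]
    rw [this, Finset.card_singleton]
  have hnm : ∀ w : F, w ≠ 0 → w ^ s = w →
      (Finset.univ.filter fun x : F => x ^ m = w).card = m :=
    fun w hw hws => herm_pow_fiber_card m (s - 1) (by omega) (by omega) hcard' w hw
      (hfix_root w hw hws)
  -- count pairs for fixed target value z^m
  have hpair : ∀ z : F,
      (Finset.univ.filter fun xy : F × F => xy.1 ^ m + xy.2 ^ m = z ^ m).card
        = (if z = 0 then 1 else m) + (s * s - (if z = 0 then 1 else m)) * m := by
    intro z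
    have hinner : ∀ y : F, (Finset.univ.filter fun x : F => x ^ m + y ^ m = z ^ m).card
        = if y ^ m = z ^ m then 1 else m := by
      intro y
      have hflt : (Finset.univ.filter fun x : F => x ^ m + y ^ m = z ^ m)
          = Finset.univ.filter fun x : F => x ^ m = z ^ m - y ^ m := by
        ext x; simp [eq_sub_iff_add_eq]
      rw [hflt]
      by_cases hcase : y ^ m = z ^ m
      · rw [if_pos hcase, hcase, sub_self, hnz]
      · rw [if_neg hcase]
        have hne : z ^ m - y ^ m ≠ 0 := sub_ne_zero.mpr fun h => hcase h.symm
        refine hnm _ hne ?_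
        rw [hFrob, hA, hA]
    have hcount : (Finset.univ.filter fun y : F => y ^ m = z ^ m).card
        = if z = 0 then 1 else m := by
      by_cases hz : z = 0
      · rw [if_pos hz, hz]; simpa using hnz
      · rw [if_neg hz]
        exact hnm _ (pow_ne_zero m hz) (hA z)
    have hcount2 : (Finset.univ.filter fun y : F => ¬ y ^ m = z ^ m).card
        = s * s - (if z = 0 then 1 else m) := by
      have h2 := Finset.card_filter_add_card_filter_not
        (s := (Finset.univ : Finset F)) (p := fun y : F => y ^ m = z ^ m)
      rw [Finset.card_univ, hcard, hcount] at h2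
      rw [← h2, Nat.add_sub_cancel_left]
    rw [herm_card_filter_prod]
    rw [Finset.sum_congr rfl fun y _ => hinner y]
    rw [Finset.sum_ite, Finset.sum_const, Finset.sum_const, smul_eq_mul, smul_eq_mul, mul_one]
    rw [hcount, hcount2]
  -- total count of affine solutions in F³
  have htriple : (Finset.univ.filter
      fun t : F × F × F => t.1 ^ m + t.2.1 ^ m = t.2.2 ^ m).card
        = ((s * s - 1) * m + (s * s - 1) * (m + (s * s - m) * m)) + 1 := by
    rw [herm_card_filter_triple (fun x y z : F => x ^ m + y ^ m = z ^ m)]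
    rw [Finset.sum_congr rfl fun z _ => hpair z]
    rw [← Finset.add_sum_erase _ _ (Finset.mem_univ (0 : F))]
    rw [if_pos rfl]
    have hconst : ∀ z ∈ Finset.univ.erase (0:F),
        ((if z = 0 then 1 else m) + (s * s - (if z = 0 then 1 else m)) * m)
          = m + (s * s - m) * m := by
      intro z hz
      rw [if_neg (Finset.mem_erase.mp hz).1]
    rw [Finset.sum_congr rfl hconst, Finset.sum_const, smul_eq_mul]
    have hec : (Finset.univ.erase (0:F)).card = s * s - 1 := by
      rw [Finset.card_erase_of_mem (Finset.mem_univ _), Finset.card_univ, hcard]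
    rw [hec, hm]
    ring
  -- transfer to vectors Fin 3 → F
  have hNv : (Finset.univ.filter
      fun v : Fin 3 → F => v 0 ^ m + v 1 ^ m = v 2 ^ m).card
        = ((s * s - 1) * m + (s * s - 1) * (m + (s * s - m) * m)) + 1 := by
    have e := Equiv.subtypeEquiv (herm_e3 F)
      (p := fun v : Fin 3 → F => v 0 ^ m + v 1 ^ m = v 2 ^ m)
      (q := fun t : F × F × F => t.1 ^ m + t.2.1 ^ m = t.2.2 ^ m) (fun v => Iff.rfl)
    calc (Finset.univ.filter fun v : Fin 3 → F => v 0 ^ m + v 1 ^ m = v 2 ^ m).card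
        = Fintype.card {v : Fin 3 → F // v 0 ^ m + v 1 ^ m = v 2 ^ m} :=
          (Fintype.card_subtype _).symm
      _ = Fintype.card {t : F × F × F // t.1 ^ m + t.2.1 ^ m = t.2.2 ^ m} :=
          Fintype.card_congr e
      _ = (Finset.univ.filter fun t : F × F × F => t.1 ^ m + t.2.1 ^ m = t.2.2 ^ m).card :=
          Fintype.card_subtype _
      _ = _ := htriple
  -- nonzero solutions
  have hzeroMem : (0 : Fin 3 → F) ∈ Finset.univ.filter
      (fun v : Fin 3 → F => v 0 ^ m + v 1 ^ m = v 2 ^ m) := by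
    rw [Finset.mem_filter]
    refine ⟨Finset.mem_univ _, ?_⟩
    show (0:F) ^ m + (0:F) ^ m = (0:F) ^ m
    rw [zero_pow (Nat.succ_ne_zero s), add_zero]
  have hfe : Finset.univ.filter
      (fun v : Fin 3 → F => v ≠ 0 ∧ v 0 ^ m + v 1 ^ m = v 2 ^ m)
        = (Finset.univ.filter (fun v : Fin 3 → F => v 0 ^ m + v 1 ^ m = v 2 ^ m)).erase 0 := by
    ext v
    simp only [Finset.mem_filter, Finset.mem_erase, Finset.mem_univ, true_and]
  have hNnz : (Finset.univ.filter
      (fun v : Fin 3 → F => v ≠ 0 ∧ v 0 ^ m + v 1 ^ m = v 2 ^ m)).card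
        = (s * s - 1) * m + (s * s - 1) * (m + (s * s - m) * m) := by
    rw [hfe, Finset.card_erase_of_mem hzeroMem, hNv, Nat.add_sub_cancel]
  -- the bijection with (projective points) × Fˣ
  have hCsmul : ∀ (c : F) (v : Fin 3 → F), c ≠ 0 →
      (((c • v) 0 ^ m + (c • v) 1 ^ m = (c • v) 2 ^ m) ↔ (v 0 ^ m + v 1 ^ m = v 2 ^ m)) := by
    intro c v hc
    simp only [Pi.smul_apply, smul_eq_mul, mul_pow, ← mul_add]
    exact mul_right_inj' (pow_ne_zero m hc)
  set X := {P : Projectivization F (Fin 3 → F) //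
      (P.rep 0) ^ m + (P.rep 1) ^ m = (P.rep 2) ^ m} with hX
  let g : X × Fˣ → {v : Fin 3 → F // v ≠ 0 ∧ v 0 ^ m + v 1 ^ m = v 2 ^ m} :=
    fun Pc => ⟨(Pc.2 : F) • Pc.1.1.rep,
      smul_ne_zero Pc.2.ne_zero (Projectivization.rep_nonzero _),
      (hCsmul _ _ Pc.2.ne_zero).mpr Pc.1.2⟩
  have hgbij : Function.Bijective g := by
    constructor
    · rintro ⟨⟨P, hP⟩, c⟩ ⟨⟨P', hP'⟩, c'⟩ h
      have h1 : (c : F) • P.rep = (c' : F) • P'.rep := congrArg Subtype.val h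
      have hPP' : P = P' := by
        conv_lhs => rw [← P.mk_rep]
        conv_rhs => rw [← P'.mk_rep]
        rw [Projectivization.mk_eq_mk_iff]
        refine ⟨c⁻¹ * c', ?_⟩
        rw [Units.smul_def, Units.val_mul, mul_smul]
        rw [show ((c' : Fˣ) : F) • P'.rep = (c' : F) • P'.rep from rfl, ← h1]
        rw [smul_smul]
        simp
      subst hPP'
      obtain ⟨i, hi⟩ := Function.ne_iff.mp (Projectivization.rep_nonzero P)
      have h2 : (c : F) * P.rep i = (c' : F) * P.rep i := congrFun h1 i
      have h3 : (c : F) = (c' : F) := mul_right_cancel₀ (by simpa using hi) h2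
      have : c = c' := Units.ext h3
      subst this
      rfl
    · rintro ⟨v, hv0, hvC⟩
      obtain ⟨a, ha⟩ := Projectivization.exists_smul_eq_mk_rep F v hv0
      have hrepC : ((Projectivization.mk F v hv0).rep 0) ^ m
          + ((Projectivization.mk F v hv0).rep 1) ^ m
          = ((Projectivization.mk F v hv0).rep 2) ^ m := by
        rw [← ha, Units.smul_def]
        exact (hCsmul _ _ a.ne_zero).mpr hvC
      refine ⟨⟨⟨Projectivization.mk F v hv0, hrepC⟩, a⁻¹⟩, ?_⟩
      apply Subtype.ext
      show ((a⁻¹ : Fˣ) : F) • (Projectivization.mk F v hv0).rep = v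
      rw [← ha, Units.smul_def, smul_smul]
      simp
  -- put everything together
  have hcards : (s * s - 1) * m + (s * s - 1) * (m + (s * s - m) * m)
      = Nat.card X * (s * s - 1) := by
    have e1 : Nat.card {v : Fin 3 → F // v ≠ 0 ∧ v 0 ^ m + v 1 ^ m = v 2 ^ m}
        = Nat.card (X × Fˣ) := (Nat.card_congr (Equiv.ofBijective g hgbij)).symm
    have e2 : Nat.card {v : Fin 3 → F // v ≠ 0 ∧ v 0 ^ m + v 1 ^ m = v 2 ^ m}
        = (s * s - 1) * m + (s * s - 1) * (m + (s * s - m) * m) := by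
      rw [Nat.card_eq_fintype_card, Fintype.card_subtype]
      exact hNnz
    rw [← e2, e1, Nat.card_prod]
    congr 1
    rw [Nat.card_eq_fintype_card, Fintype.card_units, hcard]
  have harith := herm_arith s hs3
  rw [hm] at hcards
  rw [harith] at hcards
  have hX1 : Nat.card X = s * s * s + 1 := by
    have hpos : 0 < s * s - 1 := Nat.sub_pos_of_lt (by nlinarith)
    exact (Nat.eq_of_mul_eq_mul_right hpos hcards.symm)
  have hfinal : p ^ (3 * r) = s * s * s := by
    rw [hs, ← pow_add, ← pow_add]; congr 1; ring
  rw [hX1, hfinal]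
end

section
/- Let $r$ be a positive integer, $p$ a prime, and let $d_1,\dots,d_s$ be positive integers each dividing $p^r+1$. Then $I(d_1,\dots,d_s) = \frac{(-1)^s}{p^r+1} \sum_{m=1}^{p^r+1} \prod_{i : d_i \mid m} (1-d_i)$. -/
open Finset

lemma charSum12 {ζ : ℂ} {n : ℕ} (hζ : IsPrimitiveRoot ζ n) (k : ℕ) :
    ∑ m ∈ Finset.range n, ζ ^ (m * k) = if n ∣ k then (n : ℂ) else 0 := by
  simp_rw [mul_comm, pow_mul]
  split_ifs with h
  · have h1 : ζ ^ k = 1 := (hζ.pow_eq_one_iff_dvd k).mpr h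
    simp [h1]
  · have h1 : ζ ^ k ≠ 1 := fun hc => h ((hζ.pow_eq_one_iff_dvd k).mp hc)
    rw [geom_sum_eq h1]
    have h2 : (ζ ^ k) ^ n = 1 := by
      rw [← pow_mul, mul_comm, pow_mul, hζ.pow_eq_one, one_pow]
    simp [h2]

lemma colSum12 {ζ : ℂ} {n : ℕ} (hζ : IsPrimitiveRoot ζ n) (hn : 0 < n) {dd : ℕ}
    (hdd : 0 < dd) (hdvd : dd ∣ n) (m : ℕ) :
    ∑ y ∈ Finset.Icc 1 (dd - 1), ζ ^ (m * (y * (n / dd))) =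
      if dd ∣ m then (dd : ℂ) - 1 else -1 := by
  have hω : IsPrimitiveRoot (ζ ^ (n / dd)) dd :=
    hζ.pow hn (Nat.div_mul_cancel hdvd).symm
  have h0 : ∑ y ∈ Finset.range dd, (ζ ^ (n / dd)) ^ (y * m) =
      if dd ∣ m then (dd : ℂ) else 0 := charSum12 hω m
  have hexp : ∀ y : ℕ, (ζ ^ (n / dd)) ^ (y * m) = ζ ^ (m * (y * (n / dd))) := by
    intro y; rw [← pow_mul]; congr 1; ring
  simp_rw [hexp] at h0
  have hins : Finset.range dd = insert 0 (Finset.Icc 1 (dd - 1)) := by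
    ext x
    simp only [Finset.mem_range, Finset.mem_insert, Finset.mem_Icc]
    omega
  rw [hins, Finset.sum_insert (by simp)] at h0
  simp only [mul_zero, zero_mul, pow_zero] at h0
  split_ifs with h <;> simp [h] at h0 <;> linear_combination h0

lemma range_eq_insert12 {n : ℕ} (hn : 0 < n) :
    Finset.range n = insert 0 (Finset.Icc 1 (n - 1)) := by
  ext x
  simp only [Finset.mem_range, Finset.mem_insert, Finset.mem_Icc]
  omega

lemma Icc_eq_insert12 {n : ℕ} (hn : 0 < n) :
    Finset.Icc 1 n = insert n (Finset.Icc 1 (n - 1)) := by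
  ext x
  simp only [Finset.mem_insert, Finset.mem_Icc]
  omega

lemma notmem_Icc12 {n : ℕ} (hn : 0 < n) : n ∉ Finset.Icc 1 (n - 1) := by
  simp only [Finset.mem_Icc]
  omega

theorem stmt12 (p r s : ℕ) (hp : p.Prime) (hrpos : 0 < r)
    (d : Fin s → ℕ) (hd : ∀ i, 0 < d i) (hdvd : ∀ i, d i ∣ p ^ r + 1) :
    (Nat.card {y : Fin s → ℕ //
        (∀ i, 1 ≤ y i ∧ y i ≤ d i - 1) ∧
        ∃ z : ℤ, ∑ i, (y i : ℚ) / (d i : ℚ) = (z : ℚ)} : ℚ) =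
      (-1) ^ s / ((p : ℚ) ^ r + 1) *
        ∑ m ∈ Finset.Icc 1 (p ^ r + 1),
          ∏ i ∈ Finset.univ.filter (fun i => d i ∣ m), (1 - (d i : ℚ)) := by
  classical
  set n := p ^ r + 1 with hn_def
  have hn : 0 < n := by positivity
  have hdn : ∀ i, d i * (n / d i) = n := fun i => Nat.mul_div_cancel' (hdvd i)
  set S : (Fin s → ℕ) → ℕ := fun y => ∑ i, y i * (n / d i) with hS
  -- condition equivalence
  have hcond : ∀ y : Fin s → ℕ,
      (∃ z : ℤ, ∑ i, (y i : ℚ) / (d i : ℚ) = (z : ℚ)) ↔ n ∣ S y := by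
    intro y
    have hnq : (n : ℚ) ≠ 0 := by exact_mod_cast hn.ne'
    have hsum : ∑ i, (y i : ℚ) / (d i : ℚ) = (S y : ℚ) / (n : ℚ) := by
      rw [hS]
      simp only
      rw [Nat.cast_sum, Finset.sum_div]
      refine Finset.sum_congr rfl fun i _ => ?_
      have hdi : (d i : ℚ) ≠ 0 := by exact_mod_cast (hd i).ne'
      rw [Nat.cast_mul, div_eq_div_iff hdi hnq]
      have hN : y i * n = y i * (n / d i) * d i := by
        conv_lhs => rw [← hdn i]
        ring
      exact_mod_cast hN
    rw [hsum]
    constructor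
    · rintro ⟨z, hz⟩
      have : (S y : ℚ) = z * n := by field_simp at hz; linarith [hz]
      have hint : (S y : ℤ) = z * n := by exact_mod_cast this
      have : (n : ℤ) ∣ (S y : ℤ) := ⟨z, by linarith [hint]⟩
      exact_mod_cast this
    · rintro ⟨t, ht⟩
      refine ⟨t, ?_⟩
      rw [ht]; push_cast; field_simp
  -- computing the cardinality as a finset card
  set P := Fintype.piFinset (fun i => Finset.Icc 1 (d i - 1)) with hP
  set F := P.filter (fun y => n ∣ S y) with hF
  have hsetF : {y : Fin s → ℕ | (∀ i, 1 ≤ y i ∧ y i ≤ d i - 1) ∧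
      ∃ z : ℤ, ∑ i, (y i : ℚ) / (d i : ℚ) = (z : ℚ)} = ↑F := by
    ext y
    simp only [Set.mem_setOf_eq, hF, Finset.coe_filter, hP, Fintype.mem_piFinset,
      Finset.mem_Icc]
    rw [hcond y]
  have hcard : Nat.card {y : Fin s → ℕ //
      (∀ i, 1 ≤ y i ∧ y i ≤ d i - 1) ∧
      ∃ z : ℤ, ∑ i, (y i : ℚ) / (d i : ℚ) = (z : ℚ)} = F.card := by
    rw [← Set.ncard_coe_finset, ← hsetF, ← Nat.card_coe_set_eq]
    rfl
  rw [hcard]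
  -- move to ℂ
  apply Rat.cast_injective (α := ℂ)
  push_cast
  -- the main complex identity
  have hζ : IsPrimitiveRoot (Complex.exp (2 * Real.pi * Complex.I / n)) n :=
    Complex.isPrimitiveRoot_exp n hn.ne'
  set ζ : ℂ := Complex.exp (2 * Real.pi * Complex.I / n) with hζdef
  have main : (F.card : ℂ) * n =
      ∑ m ∈ Finset.range n, ((-1 : ℂ) ^ s *
        ∏ i ∈ Finset.univ.filter (fun i => d i ∣ m), (1 - (d i : ℂ))) := by
    calc (F.card : ℂ) * n = ∑ y ∈ F, (n : ℂ) := by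
          rw [Finset.sum_const, nsmul_eq_mul, mul_comm]
      _ = ∑ y ∈ P, (if n ∣ S y then (n : ℂ) else 0) := by
          rw [hF, Finset.sum_filter]
      _ = ∑ y ∈ P, ∑ m ∈ Finset.range n, ζ ^ (m * S y) := by
          refine Finset.sum_congr rfl fun y _ => ?_
          rw [charSum12 hζ (S y)]
      _ = ∑ m ∈ Finset.range n, ∑ y ∈ P, ζ ^ (m * S y) := Finset.sum_comm
      _ = ∑ m ∈ Finset.range n, ∑ y ∈ P, ∏ i, ζ ^ (m * (y i * (n / d i))) := by
          refine Finset.sum_congr rfl fun m _ => Finset.sum_congr rfl fun y _ => ?_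
          rw [Finset.prod_pow_eq_pow_sum, ← Finset.mul_sum]
      _ = ∑ m ∈ Finset.range n, ∏ i, ∑ x ∈ Finset.Icc 1 (d i - 1),
            ζ ^ (m * (x * (n / d i))) := by
          refine Finset.sum_congr rfl fun m _ => ?_
          rw [Finset.prod_univ_sum]
      _ = ∑ m ∈ Finset.range n, ∏ i, (if d i ∣ m then (d i : ℂ) - 1 else -1) := by
          refine Finset.sum_congr rfl fun m _ => Finset.prod_congr rfl fun i _ => ?_
          exact colSum12 hζ hn (hd i) (hdvd i) m
      _ = ∑ m ∈ Finset.range n, ((-1 : ℂ) ^ s *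
            ∏ i ∈ Finset.univ.filter (fun i => d i ∣ m), (1 - (d i : ℂ))) := by
          refine Finset.sum_congr rfl fun m _ => ?_
          have hsplit : ∀ i : Fin s, (if d i ∣ m then (d i : ℂ) - 1 else -1) =
              (-1) * (if d i ∣ m then (1 - (d i : ℂ)) else 1) := by
            intro i; split_ifs <;> ring
          simp_rw [hsplit]
          rw [Finset.prod_mul_distrib, Finset.prod_const, Finset.card_univ,
            Fintype.card_fin, ← Finset.prod_filter]
  have hfil : Finset.univ.filter (fun i : Fin s => d i ∣ 0) =
      Finset.univ.filter (fun i : Fin s => d i ∣ n) :=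
    Finset.filter_congr fun i _ => by simp [hdvd i]
  have hshift :
      ∑ m ∈ Finset.range n, ∏ i ∈ Finset.univ.filter (fun i => d i ∣ m), (1 - (d i : ℂ)) =
      ∑ m ∈ Finset.Icc 1 n, ∏ i ∈ Finset.univ.filter (fun i => d i ∣ m), (1 - (d i : ℂ)) := by
    rw [range_eq_insert12 hn, Icc_eq_insert12 hn, Finset.sum_insert (by simp),
      Finset.sum_insert (notmem_Icc12 hn), hfil]
  have main2 : (F.card : ℂ) * n = (-1 : ℂ) ^ s *
      ∑ m ∈ Finset.Icc 1 n, ∏ i ∈ Finset.univ.filter (fun i => d i ∣ m), (1 - (d i : ℂ)) := by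
    rw [main, ← Finset.mul_sum, hshift]
  -- finish
  have hnC : ((n : ℕ) : ℂ) = (p : ℂ) ^ r + 1 := by rw [hn_def]; push_cast; ring
  have hnne : (p : ℂ) ^ r + 1 ≠ 0 := by rw [← hnC]; exact_mod_cast hn.ne'
  rw [div_mul_eq_mul_div, eq_div_iff hnne, ← hnC]
  exact main2
end

section
/- Let $q$ be a prime power, $\varepsilon \in \{1,-1\}$, let $d_1, d_2$ be divisors of $q - \varepsilon$ with $l = \gcd(d_1,d_2)$, let $\alpha$ be a primitive element of $\mathbb{F}_{q^2}$, and let $a_1, a_2 \in \mathbb{F}_{q^2}^*$. Then $\sum_{j=1}^{q-\varepsilon} (1-d_1)^{\theta_{d_1}(a_1,\alpha^j)} (1-d_2)^{\theta_{d_2}(a_2,\alpha^j)} = -(q-\varepsilon)(1-l)^{\theta_l(a_1,a_2)}$. -/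
/-!
Write `aᵢ = α ^ sᵢ`. As `α` has order `q² - 1` and `d ∣ q - ε ∣ q² - 1`, `θ_d(aᵢ, α ^ j)` is the
indicator of `sᵢ ≡ j [MOD d]`, and `(1 - d) ^ [P] = 1 - d [P]`. Expanding the product, the sum
over one period `1 ≤ j ≤ m = q - ε` becomes `m - m - m + d₁ d₂ N`, where `N` counts the `j`
satisfying both congruences. By the Chinese remainder theorem these form a single class modulo
`lcm d₁ d₂` when `s₁ ≡ s₂ [MOD gcd d₁ d₂]` and are absent otherwise, so `d₁ d₂ N` is `l m` or `0`.
-/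

open Finset

/-- `theta N d a b` is `1` if `a ^ (N / d) = b ^ (N / d)` and `0` otherwise. -/
def theta {F : Type*} [Monoid F] [DecidableEq F] (N d : ℕ) (a b : F) : ℕ :=
  if a ^ (N / d) = b ^ (N / d) then 1 else 0

section Generator

variable {G : Type*} [GroupWithZero G] {α : G}

lemma ne_zero_of_forall_ne_zero_exists_pow_eq (hG : 2 < Nat.card G)
    (hα : ∀ x : G, x ≠ 0 → ∃ k : ℕ, α ^ k = x) : α ≠ 0 := by
  rintro rfl
  have h_eq_one (x : G) (hx : x ≠ 0) : x = 1 := by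
    obtain ⟨k, hk⟩ := hα x hx
    rcases k with _ | k
    · exact hk.symm.trans (pow_zero _)
    · exact absurd (hk.symm.trans (zero_pow k.succ_ne_zero)) hx
  have : Subsingleton Gˣ :=
    ⟨fun u v => Units.ext ((h_eq_one u u.ne_zero).trans (h_eq_one v v.ne_zero).symm)⟩
  have := Nat.card_units G ▸ Nat.card_of_subsingleton (1 : Gˣ)
  omega

lemma orderOf_eq_card_sub_one_of_forall_exists_pow_eq (hα0 : α ≠ 0)
    (hα : ∀ x : G, x ≠ 0 → ∃ k : ℕ, α ^ k = x) : orderOf α = Nat.card G - 1 := by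
  rw [← Nat.card_units, ← orderOf_eq_card_of_forall_mem_zpowers (g := Units.mk0 α hα0)]
  · exact orderOf_units (y := Units.mk0 α hα0)
  intro u
  obtain ⟨k, hk⟩ := hα u u.ne_zero
  exact ⟨k, Units.ext (by simpa using hk)⟩

end Generator

lemma theta_pow_pow {M : Type*} [Monoid M] [DecidableEq M] {α : M} {N d : ℕ}
    (hN : orderOf α = N) (hN0 : N ≠ 0) (hdN : d ∣ N) (a b : ℕ) :
    theta N d (α ^ a) (α ^ b) = if a ≡ b [MOD d] then 1 else 0 := by
  have hfin : IsOfFinOrder α := orderOf_pos_iff.mp (hN ▸ Nat.pos_of_ne_zero hN0)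
  obtain ⟨e, rfl⟩ := hdN
  refine if_congr ?_ rfl rfl
  rw [Nat.mul_div_cancel_left e (Nat.pos_of_ne_zero (left_ne_zero_of_mul hN0)), ← pow_mul,
    ← pow_mul, hfin.pow_eq_pow_iff_modEq, hN]
  exact Nat.ModEq.mul_right_cancel_iff' (right_ne_zero_of_mul hN0)

section Counting

variable {m d : ℕ}

lemma card_filter_Icc_modEq_of_dvd (hd : 0 < d) (hdm : d ∣ m) (s : ℕ) :
    #{j ∈ Icc 1 m | s ≡ j [MOD d]} = m / d := by
  obtain ⟨k, rfl⟩ := hdm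
  have hfloor : (((d * k : ℕ) : ℚ) - s) / d = ((0 : ℕ) - s) / d + k := by
    field_simp
    push_cast
    ring
  have := Nat.Ioc_filter_modEq_card 0 (d * k) hd s
  rw [hfloor, Int.floor_add_natCast, add_sub_cancel_left, max_eq_left (by positivity)] at this
  rw [show Icc 1 (d * k) = Ioc 0 (d * k) from Icc_add_one_left_eq_Ioc 0 _,
    filter_congr fun j _ => Nat.ModEq.comm, Nat.mul_div_cancel_left _ hd]
  exact_mod_cast this

lemma card_filter_Icc_modEq_and_modEq {d₁ d₂ : ℕ} (hd₁ : 0 < d₁) (hd₂ : 0 < d₂)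
    (h₁ : d₁ ∣ m) (h₂ : d₂ ∣ m) (s₁ s₂ : ℕ) :
    #{j ∈ Icc 1 m | s₁ ≡ j [MOD d₁] ∧ s₂ ≡ j [MOD d₂]} =
      if s₁ ≡ s₂ [MOD Nat.gcd d₁ d₂] then m / Nat.lcm d₁ d₂ else 0 := by
  split_ifs with h
  · obtain ⟨c, hc₁, hc₂⟩ := Nat.chineseRemainder' h
    have hcrt (j : ℕ) : s₁ ≡ j [MOD d₁] ∧ s₂ ≡ j [MOD d₂] ↔ c ≡ j [MOD Nat.lcm d₁ d₂] :=
      ⟨fun ⟨hj₁, hj₂⟩ => Nat.mod_lcm (hc₁.trans hj₁) (hc₂.trans hj₂),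
        fun hj => ⟨hc₁.symm.trans (hj.of_dvd (Nat.dvd_lcm_left d₁ d₂)),
          hc₂.symm.trans (hj.of_dvd (Nat.dvd_lcm_right d₁ d₂))⟩⟩
    rw [filter_congr fun j _ => hcrt j]
    exact card_filter_Icc_modEq_of_dvd (Nat.lcm_pos hd₁ hd₂) (Nat.lcm_dvd h₁ h₂) c
  · rw [card_eq_zero, filter_eq_empty_iff]
    rintro j - ⟨hj₁, hj₂⟩
    exact h ((hj₁.of_dvd (Nat.gcd_dvd_left d₁ d₂)).trans
      (hj₂.of_dvd (Nat.gcd_dvd_right d₁ d₂)).symm)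

end Counting

lemma pow_ite_mul_pow_ite {R : Type*} [CommRing R] (x y : R) (P Q : Prop) [Decidable P]
    [Decidable Q] :
    (1 - x) ^ (if P then 1 else 0) * (1 - y) ^ (if Q then 1 else 0) =
      1 - (if P then x else 0) - (if Q then y else 0) + (if P ∧ Q then x * y else 0) := by
  by_cases hP : P <;> by_cases hQ : Q <;> simp only [hP, hQ, if_true, if_false, and_self,
    and_false, false_and, pow_one, pow_zero] <;> ring

theorem sum_Icc_pow_ite_modEq_mul_pow_ite_modEq {m d₁ d₂ : ℕ} (hd₁ : 0 < d₁) (hd₂ : 0 < d₂)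
    (h₁ : d₁ ∣ m) (h₂ : d₂ ∣ m) (s₁ s₂ : ℕ) :
    ∑ j ∈ Icc 1 m, (1 - (d₁ : ℤ)) ^ (if s₁ ≡ j [MOD d₁] then 1 else 0) *
        (1 - (d₂ : ℤ)) ^ (if s₂ ≡ j [MOD d₂] then 1 else 0) =
      -(m : ℤ) * (1 - (Nat.gcd d₁ d₂ : ℤ)) ^
        (if s₁ ≡ s₂ [MOD Nat.gcd d₁ d₂] then 1 else 0) := by
  simp only [pow_ite_mul_pow_ite, sum_add_distrib, sum_sub_distrib, sum_ite, sum_const_zero,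
    add_zero, sum_const, nsmul_eq_mul, Nat.card_Icc, Nat.add_sub_cancel,
    card_filter_Icc_modEq_of_dvd hd₁ h₁ s₁, card_filter_Icc_modEq_of_dvd hd₂ h₂ s₂,
    card_filter_Icc_modEq_and_modEq hd₁ hd₂ h₁ h₂ s₁ s₂]
  have e₁ : ((m / d₁ : ℕ) : ℤ) * d₁ = m := by exact_mod_cast Nat.div_mul_cancel h₁
  have e₂ : ((m / d₂ : ℕ) : ℤ) * d₂ = m := by exact_mod_cast Nat.div_mul_cancel h₂
  have e₁₂ : ((m / Nat.lcm d₁ d₂ : ℕ) : ℤ) * (d₁ * d₂) = Nat.gcd d₁ d₂ * m := by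
    have hL := Nat.div_mul_cancel (Nat.lcm_dvd h₁ h₂)
    exact_mod_cast (by rw [← Nat.gcd_mul_lcm d₁ d₂, mul_left_comm, hL] : m / _ * (d₁ * d₂) = _)
  split_ifs
  · linear_combination -e₁ - e₂ + e₁₂
  · linear_combination -e₁ - e₂

theorem stmt18_general (q : ℕ)
    (ε : ℤ) (hε : ε = 1 ∨ ε = -1)
    (d1 d2 : ℕ) (hd1 : 0 < d1) (hd2 : 0 < d2)
    (h1 : (d1 : ℤ) ∣ (q : ℤ) - ε) (h2 : (d2 : ℤ) ∣ (q : ℤ) - ε)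
    (l : ℕ) (hl : l = Nat.gcd d1 d2)
    (F : Type*) [Field F] [Fintype F] [DecidableEq F] (hF : Fintype.card F = q ^ 2)
    (α : F) (hα : ∀ x : F, x ≠ 0 → ∃ k : ℕ, α ^ k = x)
    (a1 a2 : F) (ha1 : a1 ≠ 0) (ha2 : a2 ≠ 0) :
    ∑ j ∈ Finset.Icc 1 ((q : ℤ) - ε).toNat,
        (1 - (d1 : ℤ)) ^ theta (q ^ 2 - 1) d1 a1 (α ^ j) *
          (1 - (d2 : ℤ)) ^ theta (q ^ 2 - 1) d2 a2 (α ^ j) =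
      -((q : ℤ) - ε) * (1 - (l : ℤ)) ^ theta (q ^ 2 - 1) l a1 a2 := by
  have hcard : Nat.card F = q ^ 2 := Nat.card_eq_fintype_card.trans hF
  have hq : 2 ≤ q := by
    have := hcard ▸ Finite.one_lt_card (α := F)
    nlinarith
  have hq4 : 4 ≤ q ^ 2 := Nat.pow_le_pow_left hq 2
  set m := ((q : ℤ) - ε).toNat
  have hm : (m : ℤ) = q - ε := Int.toNat_of_nonneg (by omega)
  have hN0 : q ^ 2 - 1 ≠ 0 := by omega
  have hmN : m ∣ q ^ 2 - 1 := by
    rw [← Int.natCast_dvd_natCast, hm, Nat.cast_sub (by omega)]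
    exact ⟨q + ε, by rcases hε with rfl | rfl <;> push_cast <;> ring⟩
  have h1m : d1 ∣ m := Int.natCast_dvd_natCast.mp (hm ▸ h1)
  have h2m : d2 ∣ m := Int.natCast_dvd_natCast.mp (hm ▸ h2)
  have hα0 := ne_zero_of_forall_ne_zero_exists_pow_eq (by omega) hα
  have hord : orderOf α = q ^ 2 - 1 :=
    hcard ▸ orderOf_eq_card_sub_one_of_forall_exists_pow_eq hα0 hα
  obtain ⟨s1, rfl⟩ := hα a1 ha1
  obtain ⟨s2, rfl⟩ := hα a2 ha2
  simp only [theta_pow_pow hord hN0 (h1m.trans hmN), theta_pow_pow hord hN0 (h2m.trans hmN),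
    theta_pow_pow hord hN0 ((hl ▸ Nat.gcd_dvd_left d1 d2 : l ∣ d1).trans (h1m.trans hmN))]
  rw [← hm, hl, sum_Icc_pow_ite_modEq_mul_pow_ite_modEq hd1 hd2 h1m h2m]

theorem stmt18 (q : ℕ) (hq : ∃ p t : ℕ, p.Prime ∧ 0 < t ∧ q = p ^ t)
    (ε : ℤ) (hε : ε = 1 ∨ ε = -1)
    (d1 d2 : ℕ) (hd1 : 0 < d1) (hd2 : 0 < d2)
    (h1 : (d1 : ℤ) ∣ (q : ℤ) - ε) (h2 : (d2 : ℤ) ∣ (q : ℤ) - ε)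
    (l : ℕ) (hl : l = Nat.gcd d1 d2)
    (F : Type*) [Field F] [Fintype F] [DecidableEq F] (hF : Fintype.card F = q ^ 2)
    (α : F) (hα : ∀ x : F, x ≠ 0 → ∃ k : ℕ, α ^ k = x)
    (a1 a2 : F) (ha1 : a1 ≠ 0) (ha2 : a2 ≠ 0) :
    ∑ j ∈ Finset.Icc 1 ((q : ℤ) - ε).toNat,
        (1 - (d1 : ℤ)) ^ theta (q ^ 2 - 1) d1 a1 (α ^ j) *
          (1 - (d2 : ℤ)) ^ theta (q ^ 2 - 1) d2 a2 (α ^ j) =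
      -((q : ℤ) - ε) * (1 - (l : ℤ)) ^ theta (q ^ 2 - 1) l a1 a2 :=
  stmt18_general q ε hε d1 d2 hd1 hd2 h1 h2 l hl F hF α hα a1 a2 ha1 ha2
end
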